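/- arXiv:1102.4296 — 4 statements merged into one kernel-verified Lean document; each statement's English description precedes it below -/
import Mathlib

section
/- Let E be a row-finite directed graph, let t ≥ 0 be an integer, and let v be a vertex of E. Then the set E^t_v := {λ ∈ E^t : s(λ) = v} is finite, and Σ_{λ ∈ E^t_v} 1/n_λ = 1 (an identity of rational numbers). -/
/-- A directed graph with vertex set `V` and edge set `E`. -/
structure DirGraph (V E : Type) where
  src : E → V
  rng : E → V

namespace DirGraph

variable {V E : Type}

/-- A vertex is a sink if no edge emanates from it. -/
def IsSink (G : DirGraph V E) (v : V) : Prop := ∀ e : E, G.src e ≠ v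

/-- A graph is row-finite if every vertex emits only finitely many edges. -/
def RowFinite (G : DirGraph V E) : Prop := ∀ v : V, {e : E | G.src e = v}.Finite

/-- `G.ChainFrom v l` : the list of edges `l` forms a path starting at the vertex `v`. -/
def ChainFrom (G : DirGraph V E) : V → List E → Prop
  | _, [] => True
  | v, e :: es => G.src e = v ∧ G.ChainFrom (G.rng e) es

@[simp] theorem chainFrom_nil (G : DirGraph V E) (v : V) : G.ChainFrom v [] ↔ True := Iff.rfl

@[simp] theorem chainFrom_cons (G : DirGraph V E) (v : V) (e : E) (es : List E) :
    G.ChainFrom v (e :: es) ↔ G.src e = v ∧ G.ChainFrom (G.rng e) es := Iff.rfl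

/-- A finite path in `G`: a starting vertex together with a compatible list of edges.
(Paths of length `0` are identified with their starting vertex.) -/
structure GPath (G : DirGraph V E) where
  start : V
  edges : List E
  ok : G.ChainFrom start edges

namespace GPath

variable {G : DirGraph V E}

/-- The range (terminal vertex) of a path. -/
def range (p : GPath G) : V := (p.edges.getLast?.map G.rng).getD p.start

/-- `n_λ = ∏_{i=1}^{|λ|} |s⁻¹(s(e_i))|` for a path `λ = e₁⋯e_k`; equals `1` for paths of
length zero. -/
noncomputable def nval (p : GPath G) : ℕ :=
  (p.edges.map (fun e => {f : E | G.src f = G.src e}.ncard)).prod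

end GPath

/-- Membership in `E^t`: paths of length exactly `t`, together with the paths of length
`< t` whose range is a sink. -/
def MemE (G : DirGraph V E) (t : ℕ) (p : GPath G) : Prop :=
  p.edges.length = t ∨ (p.edges.length < t ∧ G.IsSink p.range)

/-- The set `E^t` of paths of length `t` together with shorter paths ending in a sink. -/
def EtP (G : DirGraph V E) (t : ℕ) : Type _ := {p : GPath G // G.MemE t p}


end DirGraph


/-!
Removing the first edge identifies `E^{t+1}_v`, for a vertex `v` that is not a sink, with the
disjoint union over the `n = |s⁻¹(v)|` edges `e` leaving `v` of `E^t_{r(e)}`, and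
`n_{eλ} = n · n_λ`. By induction on `t` each of these `n` blocks contributes `1/n`; when `v` is
a sink, or `t = 0`, the set is `{v}` and the sum is `1/n_v = 1`.
-/

namespace DirGraph

variable {V E : Type} {G : DirGraph V E}

namespace GPath

@[ext]
theorem ext {p q : GPath G} (hstart : p.start = q.start) (hedges : p.edges = q.edges) :
    p = q := by
  cases p; cases q; cases hstart; cases hedges; rfl

def nil (v : V) : GPath G := ⟨v, [], trivial⟩

@[simp] theorem nil_edges (v : V) : (nil v : GPath G).edges = [] := rfl

@[simp] theorem range_nil (v : V) : (nil v : GPath G).range = v := rfl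

@[simp] theorem nval_nil (v : V) : (nil v : GPath G).nval = 1 := rfl

theorem eq_nil_of_edges_eq_nil {p : GPath G} (h : p.edges = []) : p = nil p.start :=
  ext rfl h

theorem edges_eq_nil_of_isSink {p : GPath G} (h : G.IsSink p.start) : p.edges = [] := by
  obtain ⟨v, _ | ⟨e, es⟩, hok⟩ := p
  · rfl
  · exact absurd hok.1 (h e)

open Classical in
/-- `e` followed by `p`, with the junk value `p` when `p` does not start at the range of `e`. -/
noncomputable def cons (e : E) (p : GPath G) : GPath G :=
  if h : p.start = G.rng e then ⟨G.src e, e :: p.edges, rfl, h ▸ p.ok⟩ else p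

section cons

variable {e : E} {p : GPath G}

theorem cons_eq (h : p.start = G.rng e) : p.cons e = ⟨G.src e, e :: p.edges, rfl, h ▸ p.ok⟩ :=
  dif_pos h

theorem cons_start (h : p.start = G.rng e) : (p.cons e).start = G.src e := by
  rw [cons_eq h]

theorem cons_edges (h : p.start = G.rng e) : (p.cons e).edges = e :: p.edges := by
  rw [cons_eq h]

theorem range_cons (h : p.start = G.rng e) : (p.cons e).range = p.range := by
  simp only [range, cons_edges h, cons_start h, List.getLast?_cons, h]
  cases p.edges.getLast? <;> rfl

theorem nval_cons (h : p.start = G.rng e) :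
    (p.cons e).nval = {f : E | G.src f = G.src e}.ncard * p.nval := by
  simp [nval, cons_edges h]

theorem eq_cons_of_edges_eq_cons {es : List E} (h : p.edges = e :: es) :
    ∃ q : GPath G, q.start = G.rng e ∧ G.src e = p.start ∧ p = q.cons e := by
  obtain ⟨v, edges, hok⟩ := p
  subst h
  refine ⟨⟨G.rng e, es, hok.2⟩, rfl, hok.1, ?_⟩
  rw [cons_eq rfl]
  exact ext hok.1.symm rfl

end cons

theorem cons_injOn (e : E) : Set.InjOn (cons e) {q : GPath G | q.start = G.rng e} :=
  fun _ hp _ hq hpq => ext (hp.trans hq.symm)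
    (List.cons_injective (by rw [← cons_edges hp, ← cons_edges hq, hpq]))

end GPath

open GPath

theorem memE_succ_cons {t : ℕ} {e : E} {p : GPath G} (h : p.start = G.rng e) :
    G.MemE (t + 1) (p.cons e) ↔ G.MemE t p := by
  simp [MemE, cons_edges h, range_cons h]

theorem memE_nil_iff {t : ℕ} {v : V} : G.MemE t (nil v) ↔ t = 0 ∨ 0 < t ∧ G.IsSink v := by
  simp [MemE, eq_comm]

/-- `E^t_v`, as a set of paths rather than of elements of `EtP`. -/
def EtFrom (G : DirGraph V E) (t : ℕ) (v : V) : Set (GPath G) :=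
  {p | G.MemE t p ∧ p.start = v}

theorem EtFrom_eq_singleton_nil {t : ℕ} {v : V} (h : t = 0 ∨ G.IsSink v) :
    G.EtFrom t v = {nil v} := by
  ext p
  constructor
  · rintro ⟨hmem, rfl⟩
    refine eq_nil_of_edges_eq_nil ?_
    rcases h with rfl | hsink
    · rcases hmem with h | h
      · exact List.length_eq_zero_iff.mp h
      · omega
    · exact edges_eq_nil_of_isSink hsink
  · rintro rfl
    refine ⟨memE_nil_iff.mpr ?_, rfl⟩
    rcases Nat.eq_zero_or_pos t with ht | ht
    · exact Or.inl ht
    · exact Or.inr ⟨ht, h.resolve_left ht.ne'⟩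

theorem EtFrom_succ_of_not_isSink {t : ℕ} {v : V} (hv : ¬G.IsSink v) :
    G.EtFrom (t + 1) v = ⋃ e ∈ {e : E | G.src e = v}, cons e '' G.EtFrom t (G.rng e) := by
  ext p
  simp only [Set.mem_iUnion, Set.mem_image, EtFrom, exists_prop]
  constructor
  · rintro ⟨hmem, rfl⟩
    cases hedges : p.edges with
    | nil =>
      rw [eq_nil_of_edges_eq_nil hedges, memE_nil_iff] at hmem
      exact absurd (hmem.resolve_left t.succ_ne_zero).2 hv
    | cons e es =>
      obtain ⟨q, hq, hsrc, rfl⟩ := eq_cons_of_edges_eq_cons hedges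
      exact ⟨e, hsrc, q, ⟨(memE_succ_cons hq).mp hmem, hq⟩, rfl⟩
  · rintro ⟨e, rfl, q, ⟨hmem, hq⟩, rfl⟩
    exact ⟨(memE_succ_cons hq).mpr hmem, cons_start hq⟩

theorem pairwiseDisjoint_image_cons (t : ℕ) (s : Set E) :
    s.PairwiseDisjoint fun e => cons e '' G.EtFrom t (G.rng e) := by
  intro e _ e' _ hne
  refine Set.disjoint_left.mpr ?_
  rintro _ ⟨q, ⟨-, hq⟩, rfl⟩ ⟨q', ⟨-, hq'⟩, heq⟩
  have := congrArg (fun p : GPath G => p.edges.head?) heq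
  simp only [cons_edges hq, cons_edges hq', List.head?_cons, Option.some.injEq] at this
  exact hne this.symm

theorem finsum_inv_nval_image_cons {t : ℕ} {e : E} (n : ℕ)
    (hn : {f : E | G.src f = G.src e}.ncard = n) :
    ∑ᶠ p ∈ cons e '' G.EtFrom t (G.rng e), (1 : ℚ) / p.nval =
      (1 / n) * ∑ᶠ q ∈ G.EtFrom t (G.rng e), (1 : ℚ) / q.nval := by
  rw [finsum_mem_image ((cons_injOn e).mono fun q hq => hq.2), mul_finsum_mem]
  refine finsum_mem_congr rfl fun q ⟨_, hq⟩ => ?_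
  rw [nval_cons hq, hn, Nat.cast_mul, one_div_mul_one_div]

theorem finite_EtFrom_and_finsum_inv_nval (hG : G.RowFinite) (t : ℕ) (v : V) :
    (G.EtFrom t v).Finite ∧ ∑ᶠ p ∈ G.EtFrom t v, (1 : ℚ) / p.nval = 1 := by
  induction t generalizing v with
  | zero => simp [EtFrom_eq_singleton_nil (Or.inl rfl)]
  | succ t ih =>
    by_cases hv : G.IsSink v
    · simp [EtFrom_eq_singleton_nil (Or.inr hv)]
    rw [EtFrom_succ_of_not_isSink hv]
    refine ⟨(hG v).biUnion fun e _ => (ih _).1.image _, ?_⟩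
    set n := {f : E | G.src f = v}.ncard
    have hn : (n : ℚ) ≠ 0 := by
      obtain ⟨e, he⟩ : ∃ e, G.src e = v := by simpa [IsSink] using hv
      exact Nat.cast_ne_zero.mpr (Set.ncard_ne_zero_of_mem he (hG v))
    calc ∑ᶠ p ∈ ⋃ e ∈ {e : E | G.src e = v}, cons e '' G.EtFrom t (G.rng e), (1 : ℚ) / p.nval
        = ∑ᶠ e ∈ {e : E | G.src e = v}, (1 : ℚ) / n := by
          rw [finsum_mem_biUnion (pairwiseDisjoint_image_cons t _) (hG v)
            fun e _ => (ih _).1.image _]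
          refine finsum_mem_congr rfl fun e (he : G.src e = v) => ?_
          rw [finsum_inv_nval_image_cons n (by rw [he]), (ih _).2, mul_one]
      _ = n * (1 / n) := by
          rw [finsum_mem_eq_finite_toFinset_sum _ (hG v), Finset.sum_const, nsmul_eq_mul,
            ← Set.ncard_eq_toFinset_card _ (hG v)]
      _ = 1 := mul_one_div_cancel hn

end DirGraph

open DirGraph

/-- For a row-finite graph `E`, an integer `t ≥ 0` and a vertex `v`, the set
`E^t_v = {λ ∈ E^t : s(λ) = v}` is finite and `Σ_{λ ∈ E^t_v} 1/n_λ = 1` in `ℚ`. -/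
theorem Et_source_finite_and_sum_inv_nval_eq_one {V E : Type} (G : DirGraph V E)
    (hG : G.RowFinite) (t : ℕ) (v : V) :
    {p : G.EtP t | p.1.start = v}.Finite ∧
      ∑ᶠ p ∈ {p : G.EtP t | p.1.start = v}, (1 : ℚ) / ((p : G.EtP t).1.nval : ℚ) = 1 := by
  have himage : (Subtype.val : G.EtP t → GPath G) '' {p | p.1.start = v} = G.EtFrom t v := by
    ext q
    exact ⟨fun ⟨p, hp, hpq⟩ => hpq ▸ ⟨p.2, hp⟩, fun ⟨hq, hqv⟩ => ⟨⟨q, hq⟩, hqv, rfl⟩⟩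
  have hinj : Set.InjOn (Subtype.val : G.EtP t → GPath G) {p | p.1.start = v} :=
    Subtype.val_injective.injOn
  obtain ⟨hfinite, hsum⟩ := finite_EtFrom_and_finsum_inv_nval hG t v
  rw [← himage] at hfinite hsum
  exact ⟨hfinite.of_finite_image hinj, (finsum_mem_image hinj).symm.trans hsum⟩
end

section
/- Let X be a locally compact Hausdorff totally disconnected topological space and let f : X → ℝ be a nonzero nonnegative continuous function vanishing at infinity. Then there exist a real number ε > 0 and a nonempty compact open subset K ⊆ X such that f(x) ≥ ε for all x ∈ K. (Consequently ε·χ_K ≤ f, where χ_K is the continuous indicator function of K, a nonzero projection in C₀(X).) -/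
/-- Let `X` be a locally compact Hausdorff totally disconnected space and
`f : X → ℝ` a nonzero nonnegative continuous function vanishing at infinity (for every
`ε > 0` the set `{x : |f x| ≥ ε}` is compact). Then there are `ε > 0` and a nonempty
compact open set `K ⊆ X` with `f(x) ≥ ε` for all `x ∈ K` (so `ε·χ_K ≤ f`). -/
theorem exists_compact_open_le_of_nonneg_zero_at_infty {X : Type} [TopologicalSpace X]
    [T2Space X] [LocallyCompactSpace X] [TotallyDisconnectedSpace X]
    (f : X → ℝ) (hcont : Continuous f) (hnonneg : ∀ x, 0 ≤ f x)
    (hinfty : ∀ ε : ℝ, 0 < ε → IsCompact {x : X | ε ≤ |f x|})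
    (hne : f ≠ 0) :
    ∃ (ε : ℝ) (K : Set X), 0 < ε ∧ K.Nonempty ∧ IsCompact K ∧ IsOpen K ∧
      ∀ x ∈ K, ε ≤ f x := by
  obtain ⟨x₀, hx₀⟩ : ∃ x, f x ≠ 0 := by
    by_contra h
    push_neg at h
    exact hne (funext h)
  have hpos : 0 < f x₀ := lt_of_le_of_ne (hnonneg x₀) (Ne.symm hx₀)
  set ε := f x₀ / 2 with hε
  have hεpos : 0 < ε := by positivity
  have hUopen : IsOpen {x : X | ε < f x} := isOpen_lt continuous_const hcont
  have hx₀U : x₀ ∈ {x : X | ε < f x} := by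
    simp only [Set.mem_setOf_eq, hε]
    linarith
  obtain ⟨V, hVclopen, hx₀V, hVU⟩ :=
    loc_compact_Haus_tot_disc_of_zero_dim.exists_subset_of_mem_open hx₀U hUopen
  refine ⟨ε, V, hεpos, ⟨x₀, hx₀V⟩, ?_, hVclopen.2, fun x hx => le_of_lt (hVU hx)⟩
  exact (hinfty ε hεpos).of_isClosed_subset hVclopen.1
    (fun x hx => by simpa [abs_of_nonneg (hnonneg x)] using le_of_lt (hVU hx))
end

section
/- Let D be a unital C*-algebra and φ : D → ℂ a faithful state. Assume that for every x ∈ D, the element φ(x)·1 lies in the norm-closed convex hull of the set {u* x u : u a unitary element of D}. Then D is simple: every closed two-sided ideal of D equals 0 or D. -/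
open scoped ComplexOrder

/-- Let `D` be a unital C*-algebra and `φ : D → ℂ` a faithful state such
that for every `x ∈ D` the element `φ(x)·1` lies in the norm-closed convex hull of
`{u* x u : u unitary in D}`. Then `D` is simple: every closed two-sided ideal is `0` or
`D`. -/
theorem simple_of_faithful_state_mem_closure_convexHull_unitaryConjugates
    {D : Type} [NormedRing D] [StarRing D] [CStarRing D] [CompleteSpace D]
    [NormedAlgebra ℂ D] [StarModule ℂ D] [PartialOrder D] [StarOrderedRing D]
    (φ : D →ₗ[ℂ] ℂ) (hφ1 : φ 1 = 1)
    (hpos : ∀ a : D, 0 ≤ a → 0 ≤ φ a)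
    (hfaithful : ∀ a : D, 0 ≤ a → φ a = 0 → a = 0)
    (hconv : ∀ x : D, φ x • (1 : D) ∈
      closure (convexHull ℝ {y : D | ∃ u ∈ unitary D, y = star u * x * u})) :
    ∀ I : TwoSidedIdeal D, IsClosed (I : Set D) → I = ⊥ ∨ I = ⊤ := by
  intro I hIcl
  by_cases hbot : I = ⊥
  · exact Or.inl hbot
  right
  -- find a nonzero element of I
  have : ∃ a : D, a ∈ I ∧ a ≠ 0 := by
    by_contra h
    push_neg at h
    apply hbot
    refine SetLike.ext fun x => ?_
    rw [TwoSidedIdeal.mem_bot]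
    constructor
    · exact fun hx => h x hx
    · rintro rfl; exact I.zero_mem
  obtain ⟨a, haI, ha0⟩ := this
  set b : D := star a * a with hb
  have hbI : b ∈ I := I.mul_mem_left _ _ haI
  have hbpos : (0 : D) ≤ b := star_mul_self_nonneg a
  have hb0 : b ≠ 0 := by
    simpa [hb, CStarRing.star_mul_self_eq_zero_iff] using ha0
  have hφb : φ b ≠ 0 := fun h => hb0 (hfaithful b hbpos h)
  -- ℂ-smul stays in I
  have hsmulC : ∀ (c : ℂ) (x : D), x ∈ I → c • x ∈ I := by
    intro c x hx
    have : c • x = (c • (1 : D)) * x := by rw [smul_mul_assoc, one_mul]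
    rw [this]
    exact I.mul_mem_left _ _ hx
  have hsmulR : ∀ (r : ℝ) (x : D), x ∈ I → r • x ∈ I := by
    intro r x hx
    have : r • x = ((r : ℂ)) • x := by
      rw [← smul_one_smul ℂ r x]
      norm_num
    rw [this]
    exact hsmulC _ _ hx
  -- the closed convex hull of conjugates of b is contained in I
  have hS : {y : D | ∃ u ∈ unitary D, y = star u * b * u} ⊆ (I : Set D) := by
    rintro y ⟨u, hu, rfl⟩
    exact I.mul_mem_right _ _ (I.mul_mem_left _ _ hbI)
  have hconvex : Convex ℝ (I : Set D) := by
    intro x hx y hy s t hs ht hst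
    exact I.add_mem (hsmulR _ _ hx) (hsmulR _ _ hy)
  have hsub : closure (convexHull ℝ {y : D | ∃ u ∈ unitary D, y = star u * b * u})
      ⊆ (I : Set D) :=
    closure_minimal (convexHull_min hS hconvex) hIcl
  have h1 : φ b • (1 : D) ∈ I := hsub (hconv b)
  have hone : (1 : D) ∈ I := by
    have := hsmulC (φ b)⁻¹ _ h1
    rwa [smul_smul, inv_mul_cancel₀ hφb, one_smul] at this
  exact TwoSidedIdeal.eq_top I hone
end

section
/- Let M and P be abelian groups, A : M → P a group homomorphism, and B : ℤ → P an injective group homomorphism. Then the kernel of the homomorphism M ⊕ ℤ → P given by (m, k) ↦ A(m) + B(k) is isomorphic to (ker A) ⊕ (A(M) ∩ B(ℤ)). -/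
/-- Let `M, P` be abelian groups, `A : M → P` a homomorphism and
`B : ℤ → P` an injective homomorphism. Then the kernel of the homomorphism
`M ⊕ ℤ → P`, `(m, k) ↦ A(m) + B(k)`, is isomorphic to `(ker A) ⊕ (A(M) ∩ B(ℤ))`. -/
theorem ker_sum_equiv_ker_prod_inter {M P : Type} [AddCommGroup M] [AddCommGroup P]
    (A : M →+ P) (B : ℤ →+ P) (hB : Function.Injective B) :
    Nonempty
      ((AddMonoidHom.ker (A.comp (AddMonoidHom.fst M ℤ) + B.comp (AddMonoidHom.snd M ℤ))) ≃+
        (AddMonoidHom.ker A × ↥(A.range ⊓ B.range))) := by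
  classical
  set f := A.comp (AddMonoidHom.fst M ℤ) + B.comp (AddMonoidHom.snd M ℤ) with hf
  have hfval : ∀ x : M × ℤ, f x = A x.1 + B x.2 := fun x => rfl
  set S := A.range ⊓ B.range with hS
  set T := S.comap B with hT
  obtain ⟨a, ha⟩ := Int.subgroup_cyclic T
  have haT : a ∈ T := ha ▸ AddSubgroup.subset_closure rfl
  have hmemT : ∀ k : ℤ, k ∈ T ↔ ∃ n : ℤ, n • a = k := by
    intro k; rw [ha, AddSubgroup.mem_closure_singleton]
  -- for (m,k) in ker f, k ∈ T
  have hkT : ∀ x : M × ℤ, x ∈ f.ker → x.2 ∈ T := by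
    intro x hx
    have hx' : A x.1 + B x.2 = 0 := hx
    refine AddSubgroup.mem_comap.2 ⟨⟨-x.1, ?_⟩, ⟨x.2, rfl⟩⟩
    simp [map_neg, eq_neg_of_add_eq_zero_right hx']
  -- choose m₀ with A m₀ = - B a
  have haS : B a ∈ S := haT
  obtain ⟨m₁, hm₁⟩ := haS.1
  set m₀ := -m₁ with hm₀def
  have hm₀ : A m₀ = -(B a) := by simp [hm₀def, hm₁]
  by_cases haz : a = 0
  · -- S is trivial
    have hS0 : ∀ y : P, y ∈ S → y = 0 := by
      intro y hy
      obtain ⟨k, hk⟩ := hy.2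
      have : k ∈ T := AddSubgroup.mem_comap.2 (by rw [hk]; exact hy)
      obtain ⟨n, hn⟩ := (hmemT k).1 this
      rw [← hk, ← hn, haz, smul_zero, map_zero]
    have hker : ∀ x : M × ℤ, x ∈ f.ker → x.2 = 0 ∧ A x.1 = 0 := by
      intro x hx
      obtain ⟨n, hn⟩ := (hmemT x.2).1 (hkT x hx)
      have h2 : x.2 = 0 := by rw [← hn, haz, smul_zero]
      have hx' : A x.1 + B x.2 = 0 := hx
      refine ⟨h2, ?_⟩
      rwa [h2, map_zero, add_zero] at hx'
    refine ⟨{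
      toFun := fun x => (⟨x.1.1, (hker x.1 x.2).2⟩, 0)
      invFun := fun y => ⟨(y.1.1, 0), by
        show A y.1.1 + B 0 = 0
        rw [map_zero, add_zero]; exact y.1.2⟩
      left_inv := by
        rintro ⟨x, hx⟩
        ext <;> simp [(hker x hx).1]
      right_inv := by
        rintro ⟨y, s⟩
        have : s = 0 := Subtype.ext (hS0 s.1 s.2)
        simp [this]
      map_add' := by
        rintro x y
        ext <;> simp }⟩
  · -- a ≠ 0
    -- θ : ker A × ℤ ≃+ ker f
    have hmem : ∀ (m : M) (n : ℤ), A m = 0 → (m + n • m₀, n • a) ∈ f.ker := by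
      intro m n hm
      show A (m + n • m₀) + B (n • a) = 0
      rw [map_add, map_zsmul, map_zsmul, hm, hm₀, zero_add, smul_neg, neg_add_cancel]
    set θ : (AddMonoidHom.ker A × ℤ) →+ f.ker :=
      { toFun := fun p => ⟨(p.1.1 + p.2 • m₀, p.2 • a), hmem p.1.1 p.2 p.1.2⟩
        map_zero' := by ext <;> simp
        map_add' := by
          rintro ⟨⟨m, hm⟩, n⟩ ⟨⟨m', hm'⟩, n'⟩
          ext <;> simp [add_smul, add_mul] <;> abel } with hθ
    have hθinj : Function.Injective θ := by
      rintro ⟨⟨m, hm⟩, n⟩ ⟨⟨m', hm'⟩, n'⟩ h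
      have h1 : m + n • m₀ = m' + n' • m₀ ∧ n • a = n' • a := by
        constructor
        · exact congrArg (fun z => z.1.1) h
        · exact congrArg (fun z => z.1.2) h
      have hn : n = n' := by
        have := h1.2
        rw [smul_eq_mul, smul_eq_mul] at this
        exact mul_right_cancel₀ haz this
      subst hn
      have hm'' : m = m' := by
        have := h1.1
        exact add_right_cancel this
      simp [hm'']
    have hθsurj : Function.Surjective θ := by
      rintro ⟨⟨m, k⟩, hx⟩
      obtain ⟨n, hn⟩ := (hmemT k).1 (hkT (m, k) hx)
      have hx' : A m + B k = 0 := hx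
      have hmk : A (m - n • m₀) = 0 := by
        rw [map_sub, map_zsmul, hm₀, smul_neg, sub_neg_eq_add, ← map_zsmul B, hn, hx']
      refine ⟨⟨⟨m - n • m₀, hmk⟩, n⟩, ?_⟩
      apply Subtype.ext
      show (m - n • m₀ + n • m₀, n • a) = (m, k)
      rw [sub_add_cancel, hn]
    set e1 : (AddMonoidHom.ker A × ℤ) ≃+ f.ker :=
      AddEquiv.ofBijective θ ⟨hθinj, hθsurj⟩ with he1
    -- e2 : ℤ ≃+ S
    have hmemS : ∀ n : ℤ, B (n • a) ∈ S := by
      intro n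
      exact ⟨⟨(-n) • m₀, by rw [map_zsmul, hm₀, smul_neg, neg_smul, neg_neg, map_zsmul]⟩,
        ⟨n • a, rfl⟩⟩
    set ψ : ℤ →+ S :=
      { toFun := fun n => ⟨B (n • a), hmemS n⟩
        map_zero' := by simp
        map_add' := by intro n n'; apply Subtype.ext; simp [add_smul, add_mul] } with hψ
    have hψinj : Function.Injective ψ := by
      intro n n' h
      have : B (n • a) = B (n' • a) := congrArg Subtype.val h
      have h2 := hB this
      rw [smul_eq_mul, smul_eq_mul] at h2
      exact mul_right_cancel₀ haz h2
    have hψsurj : Function.Surjective ψ := by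
      rintro ⟨y, hy⟩
      obtain ⟨k, hk⟩ := hy.2
      have hkT' : k ∈ T := AddSubgroup.mem_comap.2 (by rw [hk]; exact hy)
      obtain ⟨n, hn⟩ := (hmemT k).1 hkT'
      exact ⟨n, Subtype.ext (show B (n • a) = y by rw [hn, hk])⟩
    set e2 : ℤ ≃+ S := AddEquiv.ofBijective ψ ⟨hψinj, hψsurj⟩ with he2
    exact ⟨e1.symm.trans (AddEquiv.prodCongr (AddEquiv.refl _) e2)⟩
end
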